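/- arXiv:1205.6138 — 3 statements merged into one kernel-verified Lean document; each statement's English description precedes it below -/
import Mathlib

section
/- Let g ≥ 3 be an integer. There exist integers r and d with 1 ≤ r < d ≤ g−1 such that the Brill–Noether number ρ(g,r,d) = g − (r+1)(g−d+r) equals −1 if and only if g+1 is composite (i.e., g+1 is not prime). -/
/-!
Since `ρ(g,r,d) = -1` says `(r + 1)(g - d + r) = g + 1`, the substitution `a = r + 1`,
`b = g - d + r` turns the constraints `1 ≤ r < d ≤ g - 1` into `2 ≤ a ≤ b < g`. So solutions
are exactly the factorizations `g + 1 = a * b` with `2 ≤ a ≤ b`, where `b < g` is automatic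
once `g ≥ 2`; such factorizations exist precisely when `g + 1` is composite.
-/

def brillNoetherNumber (g r d : ℤ) : ℤ := g - (r + 1) * (g - d + r)

theorem exists_brillNoetherNumber_eq_neg_one_iff (g : ℤ) :
    (∃ r d : ℤ, 1 ≤ r ∧ r < d ∧ d ≤ g - 1 ∧ brillNoetherNumber g r d = -1) ↔
      ∃ a b : ℤ, 2 ≤ a ∧ a ≤ b ∧ b < g ∧ a * b = g + 1 := by
  unfold brillNoetherNumber
  constructor
  · rintro ⟨r, d, hr, hrd, hd, hρ⟩
    exact ⟨r + 1, g - d + r, by omega, by omega, by omega, by linarith⟩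
  · rintro ⟨a, b, ha, hab, hb, hmul⟩
    refine ⟨a - 1, g + a - 1 - b, by omega, by omega, by omega, ?_⟩
    rw [show g - (g + a - 1 - b) + (a - 1) = b by ring]
    linarith

theorem Nat.not_prime_iff_exists_two_le_le_mul_eq {n : ℕ} (hn : 2 ≤ n) :
    ¬ n.Prime ↔ ∃ a b, 2 ≤ a ∧ a ≤ b ∧ a * b = n := by
  constructor
  · intro hnp
    obtain ⟨a, b, ha, hb, rfl⟩ := (Nat.not_prime_iff_exists_mul_eq hn).mp hnp
    have two_le_a : 2 ≤ a := by
      by_contra! h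
      interval_cases a <;> omega
    have two_le_b : 2 ≤ b := by
      by_contra! h
      interval_cases b <;> omega
    exact ⟨min a b, max a b, le_min two_le_a two_le_b, min_le_max, min_mul_max a b⟩
  · rintro ⟨a, b, ha, hab, rfl⟩
    exact Nat.not_prime_mul (by omega) (by omega)

/-- For an integer `g ≥ 3`, the diophantine equation `ρ(g,r,d) = g - (r+1)(g-d+r) = -1`
has integer solutions with `1 ≤ r < d ≤ g - 1` if and only if `g + 1` is composite
(i.e., not prime). -/
theorem brill_noether_minus_one_solvable_iff_composite (g : ℕ) (hg : 3 ≤ g) :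
    (∃ r d : ℤ, 1 ≤ r ∧ r < d ∧ d ≤ (g : ℤ) - 1 ∧
      (g : ℤ) - (r + 1) * ((g : ℤ) - d + r) = -1) ↔ ¬ Nat.Prime (g + 1) := by
  refine (exists_brillNoetherNumber_eq_neg_one_iff g).trans ?_
  rw [Nat.not_prime_iff_exists_two_le_le_mul_eq (by omega)]
  constructor
  · rintro ⟨a, b, ha, hab, -, hmul⟩
    lift a to ℕ using by omega
    lift b to ℕ using by omega
    exact ⟨a, b, by omega, by omega, by exact_mod_cast hmul⟩
  · rintro ⟨a, b, ha, hab, hmul⟩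
    have two_b_le : 2 * b ≤ g + 1 := hmul ▸ Nat.mul_le_mul_right b ha
    exact ⟨a, b, by omega, by omega, by omega, by exact_mod_cast hmul⟩
end

section
/- For every integer s ≥ 2, set g = s(2s+1) and define Z(s) = 3(16s⁷ − 16s⁶ + 12s⁵ − 24s⁴ − 4s³ + 41s² + 9s + 2) / (s(8s⁶ − 8s⁵ − 2s⁴ + s² + 11s + 2)). Then the denominator s(8s⁶ − 8s⁵ − 2s⁴ + s² + 11s + 2) is strictly positive, Z(2) = 7, and Z(s) < 6 + 12/(g+1) for all s ≥ 2. -/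
/-! Since `g + 1 = 2s² + s + 1`, clearing denominators turns `Z(s) < 6 + 12/(g+1)` into the
positivity of a quintic in `s`, which factors as `3 (s - 1)(2s - 1)(6s³ + 5s² - 5s - 2)`.
Expanded in `s - 1`, the cubic factor and the degree-6 factor of the denominator of `Z(s)`
have only positive coefficients, so everything is positive for `s > 1`. -/

/-- The slope of the Koszul divisor `Z_s` on `M_g`, `g = s(2s+1)`. -/
def koszulSlopeZ (s : ℕ) : ℚ :=
  3 * (16 * (s : ℚ) ^ 7 - 16 * (s : ℚ) ^ 6 + 12 * (s : ℚ) ^ 5 - 24 * (s : ℚ) ^ 4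
        - 4 * (s : ℚ) ^ 3 + 41 * (s : ℚ) ^ 2 + 9 * (s : ℚ) + 2) /
    ((s : ℚ) * (8 * (s : ℚ) ^ 6 - 8 * (s : ℚ) ^ 5 - 2 * (s : ℚ) ^ 4 + (s : ℚ) ^ 2
        + 11 * (s : ℚ) + 2))

lemma koszul_slope_gap_eq {R : Type*} [CommRing R] (x : R) :
    (6 * (2 * x ^ 2 + x + 1) + 12) *
        (x * (8 * x ^ 6 - 8 * x ^ 5 - 2 * x ^ 4 + x ^ 2 + 11 * x + 2)) -
      3 * (16 * x ^ 7 - 16 * x ^ 6 + 12 * x ^ 5 - 24 * x ^ 4 - 4 * x ^ 3 + 41 * x ^ 2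
        + 9 * x + 2) * (2 * x ^ 2 + x + 1) =
      3 * (x - 1) * (2 * x - 1) * (6 * x ^ 3 + 5 * x ^ 2 - 5 * x - 2) := by
  ring

section KoszulPolynomials

variable {K : Type*} [Field K] [LinearOrder K] [IsStrictOrderedRing K] {x : K}

lemma koszul_denominator_pos (hx : 1 ≤ x) :
    0 < x * (8 * x ^ 6 - 8 * x ^ 5 - 2 * x ^ 4 + x ^ 2 + 11 * x + 2) := by
  obtain ⟨y, hy, rfl⟩ : ∃ y, 0 ≤ y ∧ x = 1 + y := ⟨x - 1, by linarith, by ring⟩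
  have hexpand : 8 * (1 + y) ^ 6 - 8 * (1 + y) ^ 5 - 2 * (1 + y) ^ 4 + (1 + y) ^ 2
      + 11 * (1 + y) + 2 = 8 * y ^ 6 + 40 * y ^ 5 + 78 * y ^ 4 + 72 * y ^ 3 + 29 * y ^ 2
      + 13 * y + 12 := by ring
  rw [hexpand]
  positivity

lemma koszul_slope_gap_pos (hx : 1 < x) :
    0 < 3 * (x - 1) * (2 * x - 1) * (6 * x ^ 3 + 5 * x ^ 2 - 5 * x - 2) := by
  obtain ⟨y, hy, rfl⟩ : ∃ y, 0 < y ∧ x = 1 + y := ⟨x - 1, by linarith, by ring⟩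
  have hexpand : 3 * (1 + y - 1) * (2 * (1 + y) - 1) *
      (6 * (1 + y) ^ 3 + 5 * (1 + y) ^ 2 - 5 * (1 + y) - 2) =
      3 * y * (1 + 2 * y) * (4 + 23 * y + 23 * y ^ 2 + 6 * y ^ 3) := by ring
  rw [hexpand]
  positivity

lemma koszul_slope_lt (hx : 1 < x) :
    3 * (16 * x ^ 7 - 16 * x ^ 6 + 12 * x ^ 5 - 24 * x ^ 4 - 4 * x ^ 3 + 41 * x ^ 2
        + 9 * x + 2) / (x * (8 * x ^ 6 - 8 * x ^ 5 - 2 * x ^ 4 + x ^ 2 + 11 * x + 2)) <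
      6 + 12 / (2 * x ^ 2 + x + 1) := by
  have hG : 0 < 2 * x ^ 2 + x + 1 := by nlinarith
  rw [div_lt_iff₀ (koszul_denominator_pos hx.le), ← sub_pos]
  have hgap := div_pos (koszul_slope_gap_pos hx) hG
  rw [← koszul_slope_gap_eq] at hgap
  convert hgap using 1
  field_simp

end KoszulPolynomials

lemma koszulSlopeZ_lt {s : ℕ} (hs : 2 ≤ s) :
    koszulSlopeZ s < 6 + 12 / (((s * (2 * s + 1) : ℕ) : ℚ) + 1) := by
  have hg : (((s * (2 * s + 1) : ℕ) : ℚ) + 1) = 2 * (s : ℚ) ^ 2 + s + 1 := by push_cast; ring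
  rw [koszulSlopeZ, hg]
  exact koszul_slope_lt (by exact_mod_cast hs)

/-- For every integer `s ≥ 2` and `g = s(2s+1)`: the denominator of `Z(s)` is positive,
`Z(2) = 7`, and `Z(s) < 6 + 12/(g+1)`. -/
theorem koszul_slope_bound :
    (∀ s : ℕ, 2 ≤ s →
      0 < (s : ℚ) * (8 * (s : ℚ) ^ 6 - 8 * (s : ℚ) ^ 5 - 2 * (s : ℚ) ^ 4 + (s : ℚ) ^ 2
            + 11 * (s : ℚ) + 2) ∧
      koszulSlopeZ s < 6 + 12 / (((s * (2 * s + 1) : ℕ) : ℚ) + 1)) ∧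
    koszulSlopeZ 2 = 7 :=
  ⟨fun s hs => ⟨koszul_denominator_pos (by exact_mod_cast (by omega : 1 ≤ s)), koszulSlopeZ_lt hs⟩,
    by norm_num [koszulSlopeZ]⟩
end

section
/- For every integer s ≥ 2, set g = 2s² + s + 1 and define D(s) = 3(48s⁸ − 56s⁷ + 92s⁶ − 90s⁵ + 86s⁴ + 324s³ + 317s² + 182s + 48) / (24s⁸ − 28s⁷ + 22s⁶ − 5s⁵ + 43s⁴ + 112s³ + 100s² + 50s + 12). Then D(2) = 7, and for every integer s ≥ 3 the strict inequalities 6 + 10/g < D(s) < 6 + 12/(g+1) hold. -/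
/-!
Long division gives `D(s) = 6 + E(s)/Q(s)` with
`E(s) = 144s⁶ - 240s⁵ + 300s³ + 351s² + 246s + 72` and `Q` the denominator of `D`.
After clearing the positive denominators, each bound becomes the positivity of an integer
polynomial in `s`; written in `t = s - 3`, all its coefficients are positive, so it is positive
for `s ≥ 3`.
-/

/-- The slope of the Koszul divisor `𝔇_s` on `M_g`, `g = 2s² + s + 1`. -/
def koszulSlopeD (s : ℕ) : ℚ :=
  3 * (48 * (s : ℚ) ^ 8 - 56 * (s : ℚ) ^ 7 + 92 * (s : ℚ) ^ 6 - 90 * (s : ℚ) ^ 5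
        + 86 * (s : ℚ) ^ 4 + 324 * (s : ℚ) ^ 3 + 317 * (s : ℚ) ^ 2 + 182 * (s : ℚ) + 48) /
    (24 * (s : ℚ) ^ 8 - 28 * (s : ℚ) ^ 7 + 22 * (s : ℚ) ^ 6 - 5 * (s : ℚ) ^ 5
        + 43 * (s : ℚ) ^ 4 + 112 * (s : ℚ) ^ 3 + 100 * (s : ℚ) ^ 2 + 50 * (s : ℚ) + 12)

def koszulSlopeDen (x : ℚ) : ℚ :=
  24 * x ^ 8 - 28 * x ^ 7 + 22 * x ^ 6 - 5 * x ^ 5 + 43 * x ^ 4 + 112 * x ^ 3 + 100 * x ^ 2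
    + 50 * x + 12

def koszulSlopeExcess (x : ℚ) : ℚ :=
  144 * x ^ 6 - 240 * x ^ 5 + 300 * x ^ 3 + 351 * x ^ 2 + 246 * x + 72

theorem koszulSlopeD_eq_six_add {s : ℕ} (h : koszulSlopeDen s ≠ 0) :
    koszulSlopeD s = 6 + koszulSlopeExcess s / koszulSlopeDen s := by
  change _ / koszulSlopeDen s = _
  rw [div_eq_iff h, add_mul, div_mul_cancel₀ _ h, koszulSlopeDen, koszulSlopeExcess]
  ring

section ThreeLe

variable {x : ℚ} (hx : 3 ≤ x)
include hx

theorem koszulSlopeDen_pos : 0 < koszulSlopeDen x := by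
  obtain ⟨t, ht, rfl⟩ := le_iff_exists_nonneg_add.mp hx
  unfold koszulSlopeDen
  ring_nf
  positivity

theorem ten_mul_koszulSlopeDen_lt :
    10 * koszulSlopeDen x < koszulSlopeExcess x * (2 * x ^ 2 + x + 1) := by
  obtain ⟨t, ht, rfl⟩ := le_iff_exists_nonneg_add.mp hx
  rw [← sub_pos]
  unfold koszulSlopeDen koszulSlopeExcess
  ring_nf
  positivity

theorem koszulSlopeExcess_mul_lt :
    koszulSlopeExcess x * (2 * x ^ 2 + x + 1 + 1) < 12 * koszulSlopeDen x := by
  obtain ⟨t, ht, rfl⟩ := le_iff_exists_nonneg_add.mp hx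
  rw [← sub_pos]
  unfold koszulSlopeDen koszulSlopeExcess
  ring_nf
  positivity

end ThreeLe

/-- `D(2) = 7`, and for every integer `s ≥ 3`, with `g = 2s² + s + 1`, the strict
inequalities `6 + 10/g < D(s) < 6 + 12/(g+1)` hold. -/
theorem koszul_slope_bound_rho_one :
    koszulSlopeD 2 = 7 ∧
    ∀ s : ℕ, 3 ≤ s →
      6 + 10 / (((2 * s ^ 2 + s + 1 : ℕ) : ℚ)) < koszulSlopeD s ∧
      koszulSlopeD s < 6 + 12 / (((2 * s ^ 2 + s + 1 : ℕ) : ℚ) + 1) := by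
  refine ⟨by norm_num [koszulSlopeD], fun s hs => ?_⟩
  have hx : (3 : ℚ) ≤ s := by exact_mod_cast hs
  have hQ := koszulSlopeDen_pos hx
  have hg : ((2 * s ^ 2 + s + 1 : ℕ) : ℚ) = 2 * (s : ℚ) ^ 2 + s + 1 := by push_cast; ring
  rw [koszulSlopeD_eq_six_add hQ.ne', hg, add_lt_add_iff_left, add_lt_add_iff_left,
    div_lt_div_iff₀ (by positivity) hQ, div_lt_div_iff₀ hQ (by positivity)]
  exact ⟨ten_mul_koszulSlopeDen_lt hx, koszulSlopeExcess_mul_lt hx⟩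
end
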